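/- The average effective resistance of the d-dimensional hypercube satisfies R_ave(Q_d) ~ 1/d as d → ∞; that is, lim_{d→∞} d · R_ave(Q_d) = 1. -/

import Mathlib

/-!
Write `d · R_ave(Q_d) = d / 2^(d+1) · ∑_{m ≥ 1} C(d,m) / m`. The absorption identity
`C(d,m) / (m+1) = C(d+1,m+1) / (d+1)` sums `∑ C(d,m) / (m+1)` to `(2^(d+1) - 1) / (d+1)`, which
alone gives the limit `1`. Replacing `1/m` by `1/(m+1)` costs `∑ C(d,m) / (m(m+1))`, at most
`3 ∑ C(d,m) / ((m+1)(m+2))`, and absorbing twice shows this is `O(2^d / d²)`, hence negligible.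
-/

open Real Finset

/-- Average effective resistance of the `d`-dimensional hypercube `Q_d`. -/
noncomputable def RaveHyp (d : ℕ) : ℝ :=
  (1 / 2 ^ d) * ∑ m ∈ Finset.Icc 1 d, (1 / (2 * (m : ℝ))) * (d.choose m)

open Filter Topology

section Absorption

variable {K : Type*} [Field K] [CharZero K]

theorem Nat.cast_choose_div_add_one (n k : ℕ) :
    (n.choose k : K) / (k + 1) = ((n + 1).choose (k + 1) : K) / (n + 1) := by
  rw [div_eq_div_iff (Nat.cast_add_one_ne_zero k) (Nat.cast_add_one_ne_zero n)]
  exact_mod_cast (mul_comm _ _).trans (Nat.add_one_mul_choose_eq n k)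

theorem sum_range_choose_div_add_one (n : ℕ) :
    ∑ k ∈ range (n + 1), (n.choose k : K) / (k + 1) = (2 ^ (n + 1) - 1) / (n + 1) := by
  simp_rw [Nat.cast_choose_div_add_one, ← sum_div]
  have h := Nat.sum_range_choose (n + 1)
  rw [sum_range_succ', Nat.choose_zero_right] at h
  have h' : ∑ k ∈ range (n + 1), ((n + 1).choose (k + 1) : K) + 1 = 2 ^ (n + 1) := by
    exact_mod_cast h
  rw [eq_sub_of_add_eq h']

theorem sum_range_choose_div_add_one_mul_add_two (n : ℕ) :
    ∑ k ∈ range (n + 1), (n.choose k : K) / ((k + 1) * (k + 2))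
      = (2 ^ (n + 2) - (n + 3)) / ((n + 1) * (n + 2)) := by
  have hterm (k : ℕ) : (n.choose k : K) / ((k + 1) * (k + 2))
      = ((n + 2).choose (k + 2) : K) / ((n + 1) * (n + 2)) := by
    have hshift :
        ((n + 1).choose (k + 1) : K) / (k + 2) = ((n + 2).choose (k + 2) : K) / (n + 2) := by
      simpa [add_assoc, one_add_one_eq_two] using
        Nat.cast_choose_div_add_one (K := K) (n + 1) (k + 1)
    rw [← div_div, Nat.cast_choose_div_add_one, div_right_comm, hshift, div_div, mul_comm]
  simp_rw [hterm, ← sum_div]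
  have h := Nat.sum_range_choose (n + 2)
  rw [sum_range_succ', sum_range_succ', Nat.choose_zero_right, Nat.choose_one_right] at h
  have h' : ∑ k ∈ range (n + 1), ((n + 2).choose (k + 2) : K) + (n + 2) + 1 = 2 ^ (n + 2) := by
    exact_mod_cast h
  rw [← h']
  ring

end Absorption

section Bounds

variable {K : Type*} [Field K] [LinearOrder K] [IsStrictOrderedRing K]

theorem sum_range_choose_div_add_one_sub_one_le (n : ℕ) :
    ∑ k ∈ range (n + 1), (n.choose k : K) / (k + 1) - 1
      ≤ ∑ m ∈ Icc 1 n, (n.choose m : K) / m := by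
  rw [sum_range_eq_add_Ico _ (by omega : 0 < n + 1), Ico_add_one_right_eq_Icc]
  simp only [Nat.choose_zero_right, Nat.cast_zero, zero_add, Nat.cast_one, div_one,
    add_sub_cancel_left]
  gcongr with m hm
  · exact_mod_cast (mem_Icc.1 hm).1
  · exact le_add_of_nonneg_right zero_le_one

theorem sum_Icc_choose_div_le (n : ℕ) :
    ∑ m ∈ Icc 1 n, (n.choose m : K) / m ≤ ∑ k ∈ range (n + 1), (n.choose k : K) / (k + 1)
      + 3 * ∑ k ∈ range (n + 1), (n.choose k : K) / ((k + 1) * (k + 2)) := by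
  have div_le {c x : K} (hc : 0 ≤ c) (hx : 1 ≤ x) :
      c / x ≤ c / (x + 1) + 3 * (c / ((x + 1) * (x + 2))) := by
    -- `(x + 1) (x + 2) ≤ x (x + 5)` exactly when `1 ≤ x`
    have : 1 / x ≤ 1 / (x + 1) + 3 / ((x + 1) * (x + 2)) := by
      rw [div_add_div _ _ (by positivity) (by positivity),
        div_le_div_iff₀ (by positivity) (by positivity)]
      nlinarith
    calc c / x = c * (1 / x) := by ring
      _ ≤ c * (1 / (x + 1) + 3 / ((x + 1) * (x + 2))) := by gcongr
      _ = _ := by ring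
  rw [mul_sum, ← sum_add_distrib]
  calc ∑ m ∈ Icc 1 n, (n.choose m : K) / m
      ≤ ∑ m ∈ Icc 1 n,
          ((n.choose m : K) / (m + 1) + 3 * ((n.choose m : K) / ((m + 1) * (m + 2)))) :=
        sum_le_sum fun m hm => div_le (by positivity) (Nat.one_le_cast.2 (mem_Icc.1 hm).1)
    _ ≤ _ := by
        refine sum_le_sum_of_subset_of_nonneg (fun m hm => ?_) fun _ _ _ => by positivity
        simp only [mem_Icc, mem_range] at hm ⊢
        omega

end Bounds

theorem natCast_mul_RaveHyp_eq (d : ℕ) :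
    d * RaveHyp d = d / 2 ^ (d + 1) * ∑ m ∈ Icc 1 d, (d.choose m : ℝ) / m := by
  rw [RaveHyp, mul_sum, mul_sum, mul_sum]
  refine sum_congr rfl fun m _ => ?_
  rw [pow_succ]
  ring

theorem le_natCast_mul_RaveHyp (d : ℕ) :
    1 - 1 / ((d : ℝ) + 1) - d * (1 / 2) ^ d ≤ d * RaveHyp d := by
  have hx : (0 : ℝ) < 2 ^ d := by positivity
  calc 1 - 1 / ((d : ℝ) + 1) - d * (1 / 2) ^ d
      ≤ d / 2 ^ (d + 1) * ((2 ^ (d + 1) - 1) / (d + 1) - 1) := by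
        rw [one_div_pow, pow_succ]
        field_simp
        nlinarith
    _ ≤ d * RaveHyp d := by
        rw [natCast_mul_RaveHyp_eq, ← sum_range_choose_div_add_one]
        gcongr
        exact sum_range_choose_div_add_one_sub_one_le d

theorem natCast_mul_RaveHyp_le (d : ℕ) :
    d * RaveHyp d ≤ 1 + 5 * (1 / ((d : ℝ) + 1)) := by
  have hx : (0 : ℝ) < 2 ^ d := by positivity
  calc d * RaveHyp d
      ≤ d / 2 ^ (d + 1) * ((2 ^ (d + 1) - 1) / (d + 1)
          + 3 * ((2 ^ (d + 2) - (d + 3)) / ((d + 1) * (d + 2)))) := by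
        rw [natCast_mul_RaveHyp_eq, ← sum_range_choose_div_add_one,
          ← sum_range_choose_div_add_one_mul_add_two]
        gcongr
        exact sum_Icc_choose_div_le d
    _ ≤ 1 + 5 * (1 / ((d : ℝ) + 1)) := by
        rw [pow_succ, pow_succ, pow_succ]
        field_simp
        nlinarith

theorem hypercube_asymptotic :
    Filter.Tendsto (fun d : ℕ => (d : ℝ) * RaveHyp d) Filter.atTop (nhds 1) := by
  have h₁ : Tendsto (fun d : ℕ => 1 / ((d : ℝ) + 1)) atTop (𝓝 0) :=
    tendsto_one_div_add_atTop_nhds_zero_nat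
  have h₂ : Tendsto (fun d : ℕ => (d : ℝ) * (1 / 2) ^ d) atTop (𝓝 0) :=
    tendsto_self_mul_const_pow_of_lt_one (by norm_num) (by norm_num)
  refine tendsto_of_tendsto_of_tendsto_of_le_of_le ?_ ?_ le_natCast_mul_RaveHyp
    natCast_mul_RaveHyp_le
  · simpa using (tendsto_const_nhds.sub h₁).sub h₂
  · simpa using tendsto_const_nhds.add (h₁.const_mul 5)
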